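/- Let U ∈ ℝ^{n×r} have orthonormal columns and satisfy assumption A2 with parameter δ_d: for every S ⊆ {1,…,n} with |S| = d, ‖(n/d)·∑_{k∈S} U^k(U^k)ᵀ − I‖ ≤ δ_d. Let G ∈ {0,1}^{n×n} have exactly d ones in every column, and let Ω be the support of G with sampling operator P_Ω. Then for every X ∈ ℝ^{n×r}, ‖UUᵀ·((n/d)·P_Ω(UXᵀ) − UXᵀ)‖_F ≤ δ_d·‖X‖_F. -/

import Mathlib

open Matrix
open scoped BigOperators

noncomputable section

/-- Euclidean norm of a vector. -/
def vecNorm {β : Type*} [Fintype β] (x : β → ℝ) : ℝ :=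
  Real.sqrt (∑ i, x i ^ 2)

/-- Spectral norm (largest singular value) of a real matrix. -/
def specNorm {α β : Type*} [Fintype α] [Fintype β] (A : Matrix α β ℝ) : ℝ :=
  sSup {c | ∃ x : β → ℝ, vecNorm x ≤ 1 ∧ c = vecNorm (A.mulVec x)}

/-- Second largest singular value of a real matrix (Courant–Fischer characterization). -/
def sigma2 {α β : Type*} [Fintype α] [Fintype β] (A : Matrix α β ℝ) : ℝ :=
  ⨅ v : β → ℝ, sSup {c | ∃ x : β → ℝ,
    vecNorm x ≤ 1 ∧ (∑ i, v i * x i) = 0 ∧ c = vecNorm (A.mulVec x)}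

/-- Frobenius norm. -/
def frobNorm {α β : Type*} [Fintype α] [Fintype β] (A : Matrix α β ℝ) : ℝ :=
  Real.sqrt (∑ i, ∑ j, A i j ^ 2)

/-- Nuclear norm: the sum of the singular values, i.e. the trace of `√(AᵀA)`. -/
def nuclearNorm {α β : Type*} [Fintype α] [Fintype β] [DecidableEq β]
    (A : Matrix α β ℝ) : ℝ :=
  (let hA := (Matrix.posSemidef_conjTranspose_mul_self A).isHermitian
   (hA.eigenvectorUnitary.1 * Matrix.diagonal ((RCLike.ofReal : ℝ → ℝ) ∘ (√·) ∘ hA.eigenvalues) *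
     (star hA.eigenvectorUnitary : Matrix β β ℝ))).trace

/-- The sampling operator `P_Ω`. -/
def sampl {n : ℕ} (Ω : Finset (Fin n × Fin n)) (M : Matrix (Fin n) (Fin n) ℝ) :
    Matrix (Fin n) (Fin n) ℝ :=
  Matrix.of fun i j => if (i, j) ∈ Ω then M i j else 0

/-- The biadjacency matrix `G` of the bipartite graph with edge set `Ω`. -/
def biadj {n : ℕ} (Ω : Finset (Fin n × Fin n)) : Matrix (Fin n) (Fin n) ℝ :=
  Matrix.of fun i j => if (i, j) ∈ Ω then (1 : ℝ) else 0

/-- `Ω` is the edge set of a `d`-regular bipartite graph: every row and every column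
of `G` has exactly `d` ones. -/
def RegularSampling {n : ℕ} (Ω : Finset (Fin n × Fin n)) (d : ℕ) : Prop :=
  (∀ i : Fin n, (Finset.univ.filter fun j => (i, j) ∈ Ω).card = d) ∧
  (∀ j : Fin n, (Finset.univ.filter fun i => (i, j) ∈ Ω).card = d)

/-- Assumption G1: the all-ones vector is a top left- and right-singular vector of `G`,
with `σ₁(G) = d`. -/
def AssumptionG1 {n : ℕ} (Ω : Finset (Fin n × Fin n)) (d : ℕ) : Prop :=
  specNorm (biadj Ω) = d ∧
  (biadj Ω).mulVec (fun _ => 1) = (fun _ => (d : ℝ)) ∧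
  Matrix.vecMul (fun _ => 1) (biadj Ω) = (fun _ => (d : ℝ))

/-- Assumption G2: `σ₂(G) ≤ C·√d`. -/
def AssumptionG2 {n : ℕ} (Ω : Finset (Fin n × Fin n)) (d : ℕ) (C : ℝ) : Prop :=
  sigma2 (biadj Ω) ≤ C * Real.sqrt d

/-- Assumption A1 (`μ₀`-incoherence) for one factor: every row `U^i` satisfies
`‖U^i‖² ≤ μ₀ r / n`. -/
def IncoherentRows {n r : ℕ} (U : Matrix (Fin n) (Fin r) ℝ) (μ₀ : ℝ) : Prop :=
  ∀ i : Fin n, (∑ k, U i k ^ 2) ≤ μ₀ * r / n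

/-- Assumption A2 (strong incoherence with parameter `δ`) for one factor:
for every `S` with `|S| = d`, `‖(n/d)·∑_{k∈S} U^k (U^k)ᵀ − I‖ ≤ δ`. -/
def StrongIncoherence {n r : ℕ} (U : Matrix (Fin n) (Fin r) ℝ) (d : ℕ) (δ : ℝ) : Prop :=
  ∀ S : Finset (Fin n), S.card = d →
    specNorm (((n : ℝ) / (d : ℝ)) • (∑ k ∈ S, Matrix.vecMulVec (U k) (U k)) - 1) ≤ δ

/-- `M = U · diagonal s · Vᵀ` is a thin SVD of the rank-`r` matrix `M`. -/
def IsThinSVD {n r : ℕ} (M : Matrix (Fin n) (Fin n) ℝ)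
    (U : Matrix (Fin n) (Fin r) ℝ) (s : Fin r → ℝ) (V : Matrix (Fin n) (Fin r) ℝ) : Prop :=
  Uᵀ * U = 1 ∧ Vᵀ * V = 1 ∧ (∀ i, 0 < s i) ∧ M = U * Matrix.diagonal s * Vᵀ

/-- The projection `P_T` onto the subspace `T` spanned by matrices `UXᵀ` and `YVᵀ`. -/
def projT {n r : ℕ} (U V : Matrix (Fin n) (Fin r) ℝ) (Z : Matrix (Fin n) (Fin n) ℝ) :
    Matrix (Fin n) (Fin n) ℝ :=
  U * Uᵀ * Z + Z * (V * Vᵀ) - U * Uᵀ * Z * (V * Vᵀ)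

/-- The projection `P_{T⊥}` onto the orthogonal complement of `T`. -/
def projTperp {n r : ℕ} (U V : Matrix (Fin n) (Fin r) ℝ) (Z : Matrix (Fin n) (Fin n) ℝ) :
    Matrix (Fin n) (Fin n) ℝ :=
  (1 - U * Uᵀ) * Z * (1 - V * Vᵀ)

end

/-! Column `j` of `Uᵀ((n/d)·P_Ω(UXᵀ) − UXᵀ)` is `B_j X^j`, where
`B_j = (n/d)·∑_{k∈S_j} U^k(U^k)ᵀ − I` and `S_j` is the support of column `j` of `G`;
since `|S_j| = d`, assumption A2 gives `‖B_j‖ ≤ δ_d`. Multiplying by `U` preserves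
Frobenius norms, so the Frobenius norm in question is at most
`√(∑_j ‖B_j‖² ‖X^j‖²) ≤ δ_d ‖X‖_F`. -/

section Norms

variable {α β γ : Type*} [Fintype α] [Fintype β] [Fintype γ]

lemma vecNorm_eq_norm_toLp (x : β → ℝ) :
    vecNorm x = ‖(WithLp.toLp 2 x : EuclideanSpace ℝ β)‖ := by
  simp [vecNorm, EuclideanSpace.norm_eq]

lemma vecNorm_nonneg (x : β → ℝ) : 0 ≤ vecNorm x :=
  Real.sqrt_nonneg _

lemma vecNorm_sq (x : β → ℝ) : vecNorm x ^ 2 = ∑ i, x i ^ 2 :=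
  Real.sq_sqrt (Finset.sum_nonneg fun _ _ => sq_nonneg _)

lemma vecNorm_smul (c : ℝ) (x : β → ℝ) : vecNorm (c • x) = |c| * vecNorm x := by
  rw [vecNorm_eq_norm_toLp, vecNorm_eq_norm_toLp, WithLp.toLp_smul, norm_smul, Real.norm_eq_abs]

lemma vecNorm_eq_zero {x : β → ℝ} : vecNorm x = 0 ↔ x = 0 := by
  rw [vecNorm_eq_norm_toLp, norm_eq_zero, WithLp.toLp_eq_zero]

lemma vecNorm_mulVec_le_frobNorm_mul (A : Matrix α β ℝ) (x : β → ℝ) :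
    vecNorm (A *ᵥ x) ≤ frobNorm A * vecNorm x := by
  rw [vecNorm, vecNorm, frobNorm, ← Real.sqrt_mul (by positivity), Finset.sum_mul]
  gcongr with i
  simpa [mulVec, dotProduct] using Finset.sum_mul_sq_le_sq_mul_sq Finset.univ (A i) x

lemma bddAbove_specNorm_set (A : Matrix α β ℝ) :
    BddAbove {c | ∃ x : β → ℝ, vecNorm x ≤ 1 ∧ c = vecNorm (A *ᵥ x)} := by
  refine ⟨frobNorm A, ?_⟩
  rintro _ ⟨x, hx, rfl⟩
  calc vecNorm (A *ᵥ x) ≤ frobNorm A * vecNorm x := vecNorm_mulVec_le_frobNorm_mul A x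
    _ ≤ frobNorm A := mul_le_of_le_one_right (Real.sqrt_nonneg _) hx

lemma specNorm_nonneg (A : Matrix α β ℝ) : 0 ≤ specNorm A :=
  le_csSup (bddAbove_specNorm_set A) ⟨0, by simp [vecNorm], by simp [vecNorm]⟩

lemma vecNorm_mulVec_le_specNorm_mul (A : Matrix α β ℝ) (x : β → ℝ) :
    vecNorm (A *ᵥ x) ≤ specNorm A * vecNorm x := by
  rcases (vecNorm_nonneg x).eq_or_lt with hx | hx
  · rw [eq_comm, vecNorm_eq_zero] at hx
    simp [hx, vecNorm]
  have hunit : vecNorm (A *ᵥ ((vecNorm x)⁻¹ • x)) ≤ specNorm A := by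
    refine le_csSup (bddAbove_specNorm_set A) ⟨_, ?_, rfl⟩
    rw [vecNorm_smul, abs_of_pos (inv_pos.mpr hx), inv_mul_cancel₀ hx.ne']
  rw [mulVec_smul, vecNorm_smul, abs_of_pos (inv_pos.mpr hx), inv_mul_le_iff₀ hx] at hunit
  linarith

lemma vecNorm_mulVec_of_transpose_mul_self [DecidableEq β] {U : Matrix α β ℝ}
    (hU : Uᵀ * U = 1) (y : β → ℝ) :
    vecNorm (U *ᵥ y) = vecNorm y := by
  have hdot : U *ᵥ y ⬝ᵥ U *ᵥ y = y ⬝ᵥ y := by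
    rw [dotProduct_mulVec, ← mulVec_transpose, mulVec_mulVec, hU, one_mulVec]
  simpa [vecNorm, dotProduct, sq] using congrArg Real.sqrt hdot

lemma frobNorm_eq_sqrt_sum_vecNorm_col_sq (A : Matrix α β ℝ) :
    frobNorm A = Real.sqrt (∑ j, vecNorm (fun i => A i j) ^ 2) := by
  simp only [frobNorm, vecNorm_sq]
  rw [Finset.sum_comm]

lemma frobNorm_mul_of_transpose_mul_self [DecidableEq β] {U : Matrix α β ℝ} (hU : Uᵀ * U = 1)
    (A : Matrix β γ ℝ) : frobNorm (U * A) = frobNorm A := by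
  simp only [frobNorm_eq_sqrt_sum_vecNorm_col_sq]
  congr 2 with j
  exact congrArg (· ^ 2) (vecNorm_mulVec_of_transpose_mul_self hU _)

lemma frobNorm_le_of_vecNorm_col_le {c : ℝ} (hc : 0 ≤ c) (A : Matrix α β ℝ)
    (B : Matrix β γ ℝ) (h : ∀ j, vecNorm (fun i => A i j) ≤ c * vecNorm (B j)) :
    frobNorm A ≤ c * frobNorm B := by
  have hB : frobNorm B = Real.sqrt (∑ j, vecNorm (B j) ^ 2) := by simp [frobNorm, vecNorm_sq]
  rw [frobNorm_eq_sqrt_sum_vecNorm_col_sq, hB, ← Real.sqrt_sq hc, ← Real.sqrt_mul (sq_nonneg c),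
    Finset.mul_sum]
  gcongr with j
  rw [← mul_pow]
  exact pow_le_pow_left₀ (vecNorm_nonneg _) (h j) 2

end Norms

section Sampling

variable {n r : ℕ}

lemma col_transpose_mul_sampl (U : Matrix (Fin n) (Fin r) ℝ) (Ω : Finset (Fin n × Fin n))
    (M : Matrix (Fin n) (Fin n) ℝ) (j : Fin n) :
    (fun k => (Uᵀ * sampl Ω M) k j) =
      ∑ i ∈ Finset.univ.filter (fun i => (i, j) ∈ Ω), M i j • U i := by
  ext k
  simp [mul_apply, sampl, Finset.sum_apply, Finset.sum_filter, mul_comm]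

lemma col_transpose_mul_sampling_error {U : Matrix (Fin n) (Fin r) ℝ} (hU : Uᵀ * U = 1)
    (c : ℝ) (Ω : Finset (Fin n × Fin n)) (X : Matrix (Fin n) (Fin r) ℝ) (j : Fin n) :
    (fun k => (Uᵀ * (c • sampl Ω (U * Xᵀ) - U * Xᵀ)) k j) =
      (c • ∑ i ∈ Finset.univ.filter (fun i => (i, j) ∈ Ω), vecMulVec (U i) (U i) - 1) *ᵥ
        X j := by
  rw [Matrix.mul_sub, Matrix.mul_smul, ← Matrix.mul_assoc, hU, Matrix.one_mul, sub_mulVec,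
    smul_mulVec, sum_mulVec, one_mulVec]
  ext k
  have hcol := congrFun (col_transpose_mul_sampl U Ω (U * Xᵀ) j) k
  simp only [Finset.sum_apply, Pi.smul_apply, smul_eq_mul] at hcol
  simp [hcol, vecMulVec_mulVec, mul_apply, dotProduct, Finset.sum_apply, mul_comm]

end Sampling

/-- `‖UUᵀ((n/d)·P_Ω(UXᵀ) − UXᵀ)‖_F ≤ δ_d ‖X‖_F` under A2
when every column of `G` has exactly `d` ones. -/
theorem stmt_8 {n d r : ℕ} {δ : ℝ} (U : Matrix (Fin n) (Fin r) ℝ) (hU : Uᵀ * U = 1)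
    (hA2 : StrongIncoherence U d δ)
    (Ω : Finset (Fin n × Fin n))
    (hcol : ∀ j : Fin n, (Finset.univ.filter fun i => (i, j) ∈ Ω).card = d) :
    ∀ X : Matrix (Fin n) (Fin r) ℝ,
      frobNorm (U * Uᵀ * (((n : ℝ) / (d : ℝ)) • sampl Ω (U * Xᵀ) - U * Xᵀ)) ≤
        δ * frobNorm X := by
  intro X
  rcases isEmpty_or_nonempty (Fin n) with _ | ⟨⟨j₀⟩⟩
  · simp [frobNorm]
  have hB (j : Fin n) := hA2 _ (hcol j)
  have hδ : 0 ≤ δ := (specNorm_nonneg _).trans (hB j₀)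
  rw [Matrix.mul_assoc, frobNorm_mul_of_transpose_mul_self hU]
  refine frobNorm_le_of_vecNorm_col_le hδ _ X fun j => ?_
  rw [col_transpose_mul_sampling_error hU]
  exact (vecNorm_mulVec_le_specNorm_mul _ _).trans
    (mul_le_mul_of_nonneg_right (hB j) (vecNorm_nonneg _))
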